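/- arXiv:1902.10642 — 3 statements merged into one kernel-verified Lean document; each statement's English description precedes it below -/
import Mathlib

section
/- Let M ⊆ ℝⁿ be an m-dimensional C^∞ submanifold, let I ⊆ ℝ be an open interval containing 0, and let φ : ℝⁿ × I → ℝⁿ be a C^∞ map such that for every x ∈ M the curve t ↦ φ(x,t) has contact of order k with M at t = 0 (in particular φ(x,0) ∈ M). Then d(φ(x,t), M)/|t|^k → 0 as t → 0, uniformly on compact subsets of M; that is, for every compact K ⊆ M and every ε > 0 there exists δ > 0 such that d(φ(x,t), M) ≤ ε·|t|^k for all x ∈ K and all t with 0 < |t| < δ. -/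
open Filter Set Metric Topology

set_option linter.unusedVariables false

/-- `M ⊆ ℝⁿ` is an `m`-dimensional `C^∞` submanifold: around every point of `M`
there is an open set `U` and a `C^∞` map `f : U → ℝ^(n-m)` with surjective
derivative at every point of `U` such that `M ∩ U = {x ∈ U | f x = 0}`. -/
def IsSmoothSubmanifold {n : ℕ} (m : ℕ) (M : Set (EuclideanSpace ℝ (Fin n))) : Prop :=
  ∀ p ∈ M, ∃ U : Set (EuclideanSpace ℝ (Fin n)), IsOpen U ∧ p ∈ U ∧
    ∃ f : EuclideanSpace ℝ (Fin n) → EuclideanSpace ℝ (Fin (n - m)),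
      ContDiffOn ℝ (⊤ : ℕ∞) f U ∧ (∀ x ∈ U, Function.Surjective (fderiv ℝ f x)) ∧
      M ∩ U = {x ∈ U | f x = 0}

/-- A curve `γ : ℝ → ℝⁿ` has contact of order `k` with `M ⊆ ℝⁿ` at `t = 0`: there is a
smooth curve `δ` with values in `M` whose derivatives at `0` up to order `k` agree with
those of `γ`. -/
def HasContactOrderAt {n : ℕ} (k : ℕ) (γ : ℝ → EuclideanSpace ℝ (Fin n))
    (M : Set (EuclideanSpace ℝ (Fin n))) : Prop :=
  ∃ δ : ℝ → EuclideanSpace ℝ (Fin n), ContDiff ℝ (⊤ : ℕ∞) δ ∧ (∀ t, δ t ∈ M) ∧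
    ∀ j ≤ k, iteratedDeriv j γ 0 = iteratedDeriv j δ 0


lemma evEq_iteratedDeriv {E : Type} [NormedAddCommGroup E] [NormedSpace ℝ E]
    {f g : ℝ → E} {x : ℝ} (h : f =ᶠ[𝓝 x] g) (n : ℕ) :
    iteratedDeriv n f x = iteratedDeriv n g x := by
  rw [iteratedDeriv_eq_iteratedFDeriv, iteratedDeriv_eq_iteratedFDeriv]
  have h' : f =ᶠ[𝓝[Set.univ] x] g := by rwa [nhdsWithin_univ]
  have := h'.iteratedFDerivWithin_eq h.self_of_nhds (𝕜 := ℝ) n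
  rw [iteratedFDerivWithin_univ, iteratedFDerivWithin_univ] at this
  rw [this]

lemma iteratedDeriv_zero_fun {E : Type} [NormedAddCommGroup E] [NormedSpace ℝ E]
    (n : ℕ) (x : ℝ) : iteratedDeriv n (fun _ : ℝ => (0 : E)) x = 0 := by
  rw [iteratedDeriv_eq_iteratedFDeriv]
  have : iteratedFDeriv ℝ n (fun _ : ℝ => (0:E)) = 0 := iteratedFDeriv_zero_fun
  rw [this]
  rfl

lemma contDiffOn_iteratedDeriv_open {E : Type} [NormedAddCommGroup E] [NormedSpace ℝ E]
    {s : Set ℝ} (hs : IsOpen s) {f : ℝ → E} (hf : ContDiffOn ℝ (⊤ : ℕ∞) f s) (j : ℕ) :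
    ContDiffOn ℝ (⊤ : ℕ∞) (iteratedDeriv j f) s := by
  induction j with
  | zero => rwa [iteratedDeriv_zero]
  | succ j IH =>
      rw [iteratedDeriv_succ]
      exact IH.deriv_of_isOpen hs (by simp)

section
variable {E : Type} [NormedAddCommGroup E] [NormedSpace ℝ E]

lemma evEq_iteratedDeriv' {f g : ℝ → E} {x : ℝ} (h : f =ᶠ[𝓝 x] g) (n : ℕ) :
    iteratedDeriv n f x = iteratedDeriv n g x := by
  rw [iteratedDeriv_eq_iteratedFDeriv, iteratedDeriv_eq_iteratedFDeriv]
  have h' : f =ᶠ[𝓝[Set.univ] x] g := by rwa [nhdsWithin_univ]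
  have := h'.iteratedFDerivWithin_eq h.self_of_nhds (𝕜 := ℝ) n
  rw [iteratedFDerivWithin_univ, iteratedFDerivWithin_univ] at this
  rw [this]

lemma iteratedDeriv_pair {F : Type} [NormedAddCommGroup F] [NormedSpace ℝ F]
    {s : Set ℝ} (hs : IsOpen s) {γ : ℝ → E} {η : ℝ → F}
    (hγ : ContDiffOn ℝ (⊤ : ℕ∞) γ s) (hη : ContDiffOn ℝ (⊤ : ℕ∞) η s) (j : ℕ) :
    ∀ t ∈ s, iteratedDeriv j (fun t => (γ t, η t)) t
      = (iteratedDeriv j γ t, iteratedDeriv j η t) := by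
  induction j with
  | zero => intro t _; simp [iteratedDeriv_zero]
  | succ j IH =>
      intro t ht
      have hev : iteratedDeriv j (fun t => (γ t, η t))
          =ᶠ[𝓝 t] fun t => (iteratedDeriv j γ t, iteratedDeriv j η t) :=
        eventually_of_mem (hs.mem_nhds ht) IH
      have hdγ : DifferentiableAt ℝ (iteratedDeriv j γ) t :=
        (((contDiffOn_iteratedDeriv_open hs hγ j) t ht).differentiableWithinAt
          (by simp)).differentiableAt (hs.mem_nhds ht)
      have hdη : DifferentiableAt ℝ (iteratedDeriv j η) t :=
        (((contDiffOn_iteratedDeriv_open hs hη j) t ht).differentiableWithinAt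
          (by simp)).differentiableAt (hs.mem_nhds ht)
      rw [iteratedDeriv_succ, iteratedDeriv_succ, iteratedDeriv_succ]
      rw [hev.deriv_eq]
      exact (hdγ.hasDerivAt.prodMk hdη.hasDerivAt).deriv

end
lemma jets_comp (k : ℕ) :
    ∀ {E F' : Type} [NormedAddCommGroup E] [NormedSpace ℝ E]
      [NormedAddCommGroup F'] [NormedSpace ℝ F']
      (Φ : E → F') (_ : ContDiff ℝ (⊤ : ℕ∞) Φ)
      (s : Set ℝ) (_ : IsOpen s) (_ : (0:ℝ) ∈ s)
      (γ δ : ℝ → E) (_ : ContDiffOn ℝ (⊤ : ℕ∞) γ s) (_ : ContDiffOn ℝ (⊤ : ℕ∞) δ s)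
      (_ : ∀ j ≤ k, iteratedDeriv j γ 0 = iteratedDeriv j δ 0),
      ∀ j ≤ k, iteratedDeriv j (fun t => Φ (γ t)) 0 = iteratedDeriv j (fun t => Φ (δ t)) 0 := by
  induction k with
  | zero =>
      intro E F' _ _ _ _ Φ hΦ s hs h0 γ δ hγ hδ hjets j hj
      interval_cases j
      simp only [iteratedDeriv_zero]
      have := hjets 0 le_rfl
      simp only [iteratedDeriv_zero] at this
      rw [this]
  | succ k IH =>
      intro E F' _ _ _ _ Φ hΦ s hs h0 γ δ hγ hδ hjets j hj
      obtain _ | i := j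
      · simp only [iteratedDeriv_zero]
        have := hjets 0 (Nat.zero_le _)
        simp only [iteratedDeriv_zero] at this
        rw [this]
      · have hik : i ≤ k := Nat.lt_succ_iff.mp hj
        rw [iteratedDeriv_succ', iteratedDeriv_succ']
        -- the derivative functions
        set Ψ : E × E → F' := fun y => fderiv ℝ Φ y.1 y.2 with hΨdef
        have hfd : ContDiff ℝ (⊤ : ℕ∞) (fderiv ℝ Φ) := hΦ.fderiv_right (by simp)
        have hΨ : ContDiff ℝ (⊤ : ℕ∞) Ψ :=
          (hfd.comp contDiff_fst).clm_apply contDiff_snd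
        have hγ' : ContDiffOn ℝ (⊤ : ℕ∞) (deriv γ) s := hγ.deriv_of_isOpen hs (by simp)
        have hδ' : ContDiffOn ℝ (⊤ : ℕ∞) (deriv δ) s := hδ.deriv_of_isOpen hs (by simp)
        have hc₁ : ContDiffOn ℝ (⊤ : ℕ∞) (fun t => (γ t, deriv γ t)) s := hγ.prodMk hγ'
        have hc₂ : ContDiffOn ℝ (⊤ : ℕ∞) (fun t => (δ t, deriv δ t)) s := hδ.prodMk hδ'
        have hjets' : ∀ j ≤ k, iteratedDeriv j (fun t => (γ t, deriv γ t)) 0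
            = iteratedDeriv j (fun t => (δ t, deriv δ t)) 0 := by
          intro j hjk
          rw [iteratedDeriv_pair hs hγ hγ' j 0 h0, iteratedDeriv_pair hs hδ hδ' j 0 h0]
          refine Prod.ext (hjets j (le_trans hjk (Nat.le_succ k))) ?_
          have h1 : iteratedDeriv j (deriv γ) 0 = iteratedDeriv (j+1) γ 0 := by
            rw [iteratedDeriv_succ']
          have h2 : iteratedDeriv j (deriv δ) 0 = iteratedDeriv (j+1) δ 0 := by
            rw [iteratedDeriv_succ']
          rw [h1, h2]
          exact hjets (j+1) (Nat.succ_le_succ hjk)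
        have key := IH Ψ hΨ s hs h0 _ _ hc₁ hc₂ hjets' i hik
        have hder : ∀ (ζ : ℝ → E), ContDiffOn ℝ (⊤ : ℕ∞) ζ s →
            deriv (fun t => Φ (ζ t)) =ᶠ[𝓝 (0:ℝ)] fun t => Ψ (ζ t, deriv ζ t) := by
          intro ζ hζ
          refine eventually_of_mem (hs.mem_nhds h0) (fun t ht => ?_)
          have hζt : HasDerivAt ζ (deriv ζ t) t :=
            (((hζ t ht).differentiableWithinAt (by simp)).differentiableAt
              (hs.mem_nhds ht)).hasDerivAt
          have hΦ' : HasFDerivAt Φ (fderiv ℝ Φ (ζ t)) (ζ t) :=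
            ((hΦ.differentiable (by simp)) (ζ t)).hasFDerivAt
          exact (hΦ'.comp_hasDerivAt t hζt).deriv
        rw [evEq_iteratedDeriv' (hder γ hγ) i, evEq_iteratedDeriv' (hder δ hδ) i]
        exact key
lemma uniform_vanish {a b : ℝ} (ha : a < 0) (hb : 0 < b) (k : ℕ) :
    ∀ {E F : Type} [NormedAddCommGroup E] [NormedSpace ℝ E]
      [NormedAddCommGroup F] [NormedSpace ℝ F]
      (H : E × ℝ → F) (_ : ContDiffOn ℝ (⊤ : ℕ∞) H (Set.univ ×ˢ Set.Ioo a b))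
      (S : Set E) (_ : ∀ x ∈ S, ∀ j ≤ k, iteratedDeriv j (fun t => H (x, t)) 0 = 0)
      (p : E) (ε : ℝ) (_ : 0 < ε),
      ∃ r > 0, ∃ d > 0, ∀ x ∈ S, dist x p ≤ r → ∀ t : ℝ, |t| ≤ d →
        ‖H (x, t)‖ ≤ ε * |t| ^ k := by
  induction k with
  | zero =>
      intro E F _ _ _ _ H hH S hS p ε hε
      have hW : IsOpen ((Set.univ : Set E) ×ˢ Set.Ioo a b) := isOpen_univ.prod isOpen_Ioo
      have hp0 : ((p, (0:ℝ)) : E × ℝ) ∈ (Set.univ : Set E) ×ˢ Set.Ioo a b :=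
        ⟨Set.mem_univ _, ha, hb⟩
      obtain ⟨L, u, hu, hLip⟩ :=
        ((hH.contDiffAt (hW.mem_nhds hp0)).of_le (by exact_mod_cast le_top :
          (1 : WithTop ℕ∞) ≤ ((⊤ : ℕ∞) : WithTop ℕ∞))).exists_lipschitzOnWith
      obtain ⟨ρ, hρ, hball⟩ := Metric.mem_nhds_iff.mp hu
      refine ⟨ρ/2, by positivity, min (ρ/2) (ε / (L + 1)), by positivity, ?_⟩
      intro x hx hxp t ht
      have hmem : ∀ s : ℝ, |s| ≤ ρ/2 → (x, s) ∈ u := by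
        intro s hs
        apply hball
        rw [mem_ball, Prod.dist_eq]
        have : dist s (0:ℝ) = |s| := by simp [Real.dist_eq]
        rw [this]
        exact lt_of_le_of_lt (max_le hxp hs) (by linarith)
      have h0 : H (x, 0) = 0 := by
        have := hS x hx 0 le_rfl
        simpa [iteratedDeriv_zero] using this
      have ht' : |t| ≤ ρ/2 := le_trans ht (min_le_left _ _)
      have := hLip.dist_le_mul (x, t) (hmem t ht') (x, 0) (hmem 0 (by simp; positivity))
      rw [dist_eq_norm, Prod.dist_eq] at this
      simp only [h0, sub_zero, dist_self] at this
      have hdt : (0:ℝ) ⊔ |t| = |t| := max_eq_right (abs_nonneg t)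
      rw [Real.dist_eq, sub_zero, hdt] at this
      calc ‖H (x, t)‖ ≤ L * |t| := this
        _ ≤ L * (ε / (L+1)) := by
            apply mul_le_mul_of_nonneg_left (le_trans ht (min_le_right _ _)) L.coe_nonneg
        _ ≤ ε := by
            have hL1 : (0:ℝ) < L + 1 := by positivity
            have he : (L:ℝ) * (ε / (L+1)) = ε * ((L:ℝ)/(L+1)) := by ring
            rw [he]
            exact mul_le_of_le_one_right hε.le ((div_le_one hL1).mpr (by linarith))
        _ = ε * |t| ^ 0 := by simp
  | succ k IH =>
      intro E F _ _ _ _ H hH S hS p ε hε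
      have hW : IsOpen ((Set.univ : Set E) ×ˢ Set.Ioo a b) := isOpen_univ.prod isOpen_Ioo
      set H' : E × ℝ → F := fun z => fderiv ℝ H z (0, 1) with hH'def
      have hH' : ContDiffOn ℝ (⊤ : ℕ∞) H' (Set.univ ×ˢ Set.Ioo a b) :=
        (hH.fderiv_of_isOpen hW (by simp)).clm_apply contDiffOn_const
      have hderiv : ∀ (x : E) (s : ℝ), s ∈ Set.Ioo a b →
          HasDerivAt (fun t => H (x, t)) (H' (x, s)) s := by
        intro x s hs
        have hmem : ((x, s) : E × ℝ) ∈ (Set.univ ×ˢ Set.Ioo a b : Set _) := ⟨Set.mem_univ _, hs⟩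
        have hdH : HasFDerivAt H (fderiv ℝ H (x, s)) (x, s) :=
          (((hH.contDiffAt (hW.mem_nhds hmem)).of_le (by exact_mod_cast le_top :
            (1 : WithTop ℕ∞) ≤ ((⊤ : ℕ∞) : WithTop ℕ∞))).differentiableAt
            one_ne_zero).hasFDerivAt
        have hc : HasDerivAt (fun t : ℝ => ((x, t) : E × ℝ)) ((0:E), (1:ℝ)) s :=
          (hasDerivAt_const s x).prodMk (hasDerivAt_id s)
        exact hdH.comp_hasDerivAt s hc
      have hS' : ∀ x ∈ S, ∀ j ≤ k, iteratedDeriv j (fun t => H' (x, t)) 0 = 0 := by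
        intro x hx j hj
        have hev : (fun t => H' (x, t)) =ᶠ[𝓝 (0:ℝ)] deriv (fun t => H (x, t)) := by
          refine eventually_of_mem (isOpen_Ioo.mem_nhds ⟨ha, hb⟩) (fun s hs => ?_)
          exact ((hderiv x s hs).deriv).symm
        rw [evEq_iteratedDeriv' hev j]
        have : iteratedDeriv j (deriv fun t => H (x, t)) 0
            = iteratedDeriv (j+1) (fun t => H (x, t)) 0 := by rw [iteratedDeriv_succ']
        rw [this]
        exact hS x hx (j+1) (Nat.succ_le_succ hj)
      obtain ⟨r, hr, d, hd, hbound⟩ := IH H' hH' S hS' p ε hε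
      refine ⟨r, hr, min d (min (-a/2) (b/2)), lt_min hd (lt_min (by linarith) (by linarith)), ?_⟩
      intro x hx hxp t ht
      have htd : |t| ≤ d := le_trans ht (min_le_left _ _)
      have hta : |t| ≤ -a/2 := le_trans ht (le_trans (min_le_right _ _) (min_le_left _ _))
      have htb : |t| ≤ b/2 := le_trans ht (le_trans (min_le_right _ _) (min_le_right _ _))
      have hIoo : ∀ s : ℝ, |s| ≤ |t| → s ∈ Set.Ioo a b := by
        intro s hs
        constructor
        · nlinarith [abs_nonneg s, neg_abs_le s, le_abs_self s]
        · nlinarith [abs_nonneg s, neg_abs_le s, le_abs_self s]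
      have h0 : H (x, 0) = 0 := by
        have := hS x hx 0 (Nat.zero_le _)
        simpa [iteratedDeriv_zero] using this
      have habs : ∀ s ∈ Set.uIcc (0:ℝ) t, |s| ≤ |t| := by
        intro s hs
        rcases le_total (0:ℝ) t with h | h
        · rw [Set.uIcc_of_le h] at hs
          rw [abs_of_nonneg hs.1, abs_of_nonneg h]; exact hs.2
        · rw [Set.uIcc_of_ge h] at hs
          rw [abs_of_nonpos hs.2, abs_of_nonpos h]; linarith [hs.1]
      have hmvt := Convex.norm_image_sub_le_of_norm_hasDerivWithin_le
        (f := fun s => H (x, s)) (f' := fun s => H' (x, s)) (s := Set.uIcc (0:ℝ) t)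
        (fun s hs => ((hderiv x s (hIoo s (habs s hs))).hasDerivWithinAt))
        (fun s hs => by
          have := hbound x hx hxp s (le_trans (habs s hs) htd)
          calc ‖H' (x, s)‖ ≤ ε * |s| ^ k := this
            _ ≤ ε * |t| ^ k := by
                apply mul_le_mul_of_nonneg_left _ (le_of_lt hε)
                exact pow_le_pow_left₀ (abs_nonneg s) (habs s hs) k)
        (convex_uIcc _ _) (Set.left_mem_uIcc) (Set.right_mem_uIcc)
      have hmvt' : ‖H (x, t)‖ ≤ ε * |t| ^ k * |t| := by
        have h' := hmvt
        simp only [h0, sub_zero, Real.norm_eq_abs] at h'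
        exact h'
      calc ‖H (x, t)‖ ≤ ε * |t| ^ k * |t| := hmvt'
        _ = ε * |t| ^ (k+1) := by rw [pow_succ]; ring

set_option maxHeartbeats 2000000 in
lemma local_dist_bound {n m : ℕ} (M : Set (EuclideanSpace ℝ (Fin n)))
    (hM : IsSmoothSubmanifold m M) (q : EuclideanSpace ℝ (Fin n)) (hq : q ∈ M) :
    ∃ (g : EuclideanSpace ℝ (Fin n) → EuclideanSpace ℝ (Fin (n - m))) (C ρ : ℝ),
      0 < C ∧ 0 < ρ ∧ ContDiff ℝ (⊤ : ℕ∞) g ∧ (∀ y ∈ M, g y = 0) ∧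
      ∀ y, dist y q < ρ → Metric.infDist y M ≤ C * ‖g y‖ := by
  classical
  obtain ⟨U, hU, hqU, f, hf, hsurj, hMU⟩ := hM q hq
  obtain ⟨r0, hr0, hball⟩ := Metric.isOpen_iff.mp hU q hqU
  -- the bump function
  set bump : ContDiffBump q := ⟨r0/3, r0/2, by positivity, by linarith⟩ with hbump
  have hsupp : Function.support (bump : EuclideanSpace ℝ (Fin n) → ℝ) = Metric.ball q (r0/2) := bump.support_eq
  have hrOut : bump.rOut = r0/2 := rfl
  have htsupp : tsupport (bump : EuclideanSpace ℝ (Fin n) → ℝ) ⊆ Metric.ball q r0 := by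
    rw [bump.tsupport_eq]
    intro z hz
    have h1 : dist z q ≤ bump.rOut := Metric.mem_closedBall.mp hz
    rw [hrOut] at h1
    exact lt_of_le_of_lt h1 (by linarith)
  set g : EuclideanSpace ℝ (Fin n) → EuclideanSpace ℝ (Fin (n - m)) := fun y => bump y • f y with hgdef
  have hfq : f q = 0 := by
    have : q ∈ M ∩ U := ⟨hq, hqU⟩
    rw [hMU] at this
    exact this.2
  have hbump_one : ∀ z ∈ Metric.ball q (r0/3), bump z = 1 := fun z hz =>
    bump.one_of_mem_closedBall (Metric.ball_subset_closedBall hz)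
  have hgf : ∀ z ∈ Metric.ball q (r0/3), g z = f z := by
    intro z hz
    rw [hgdef]; simp only [hbump_one z hz, one_smul]
  have hzero_outside : ∀ z, z ∉ Metric.ball q r0 → g z = 0 := by
    intro z hz
    have : bump z = 0 := by
      by_contra h
      exact hz (htsupp (subset_tsupport _ (by simpa [Function.mem_support] using h)))
    simp [hgdef, this]
  have hg : ContDiff ℝ (⊤ : ℕ∞) g := by
    rw [contDiff_iff_contDiffAt]
    intro y
    by_cases hy : y ∈ U
    · exact (bump.contDiff.contDiffAt).smul ((hf.contDiffAt (hU.mem_nhds hy)).of_le (by simp))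
    · have hynb : y ∉ tsupport (bump : EuclideanSpace ℝ (Fin n) → ℝ) := fun h => hy (hball (htsupp h))
      have hopen : IsOpen ((tsupport (bump : EuclideanSpace ℝ (Fin n) → ℝ))ᶜ) := (isClosed_tsupport _).isOpen_compl
      refine (contDiffAt_const (c := (0:EuclideanSpace ℝ (Fin (n-m))))).congr_of_eventuallyEq ?_
      refine Filter.eventually_of_mem (hopen.mem_nhds hynb) (fun z hz => ?_)
      have : bump z = 0 := by
        by_contra h
        exact hz (subset_tsupport _ (by simpa [Function.mem_support] using h))
      simp [hgdef, this]
  have hgM : ∀ y ∈ M, g y = 0 := by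
    intro y hy
    by_cases hyU : y ∈ U
    · have : y ∈ M ∩ U := ⟨hy, hyU⟩
      rw [hMU] at this
      simp [hgdef, this.2]
    · exact hzero_outside y (fun h => hyU (hball h))
  -- derivative data
  set A : EuclideanSpace ℝ (Fin n) →L[ℝ] EuclideanSpace ℝ (Fin (n-m)) := fderiv ℝ f q with hA
  have hAsurj : Function.Surjective A := hsurj q hqU
  have hgq_ev : g =ᶠ[nhds q] f :=
    Filter.eventually_of_mem (Metric.ball_mem_nhds q (by positivity)) hgf
  have hfderivg : fderiv ℝ g q = A := by rw [hA]; exact hgq_ev.fderiv_eq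
  set Kr : Submodule ℝ (EuclideanSpace ℝ (Fin n)) := LinearMap.ker (A : EuclideanSpace ℝ (Fin n) →ₗ[ℝ] EuclideanSpace ℝ (Fin (n-m))) with hKr
  set π : EuclideanSpace ℝ (Fin n) →L[ℝ] Kr := Kr.orthogonalProjectionOnto with hπ
  set T : EuclideanSpace ℝ (Fin n) →L[ℝ] (EuclideanSpace ℝ (Fin (n-m)) × Kr) := A.prod π with hT
  have hTinj : Function.Injective T := by
    rw [injective_iff_map_eq_zero]
    intro v hv
    rw [hT] at hv
    have h1 : A v = 0 := congrArg Prod.fst hv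
    have h2 : π v = 0 := congrArg Prod.snd hv
    have hvK : v ∈ Kr := by rw [hKr]; exact LinearMap.mem_ker.mpr h1
    have := Submodule.orthogonalProjectionOnto_mem_subspace_eq_self (K := Kr) ⟨v, hvK⟩
    rw [hπ] at h2
    rw [h2] at this
    simpa using congrArg Subtype.val this.symm
  have hdim : Module.finrank ℝ (EuclideanSpace ℝ (Fin n))
      = Module.finrank ℝ (EuclideanSpace ℝ (Fin (n-m)) × Kr) := by
    have hrn := LinearMap.finrank_range_add_finrank_ker (A : EuclideanSpace ℝ (Fin n) →ₗ[ℝ] EuclideanSpace ℝ (Fin (n-m)))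
    have hrange : LinearMap.range (A : EuclideanSpace ℝ (Fin n) →ₗ[ℝ] EuclideanSpace ℝ (Fin (n-m))) = ⊤ :=
      LinearMap.range_eq_top.mpr hAsurj
    rw [hrange, finrank_top] at hrn
    rw [Module.finrank_prod]
    have hk : LinearMap.ker (A : EuclideanSpace ℝ (Fin n) →ₗ[ℝ] EuclideanSpace ℝ (Fin (n-m))) = Kr := rfl
    rw [hk] at hrn
    exact hrn.symm
  set eL := LinearMap.linearEquivOfInjective
    (T : EuclideanSpace ℝ (Fin n) →ₗ[ℝ] EuclideanSpace ℝ (Fin (n-m)) × Kr)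
    hTinj hdim with heL
  set e := eL.toContinuousLinearEquiv with he
  have heT : (e : EuclideanSpace ℝ (Fin n) →L[ℝ] EuclideanSpace ℝ (Fin (n-m)) × Kr)
      = T := by
    apply ContinuousLinearMap.ext
    intro v
    show eL v = T v
    rw [heL, LinearMap.linearEquivOfInjective_apply]
    rfl
  set h : EuclideanSpace ℝ (Fin n) → EuclideanSpace ℝ (Fin (n-m)) × Kr :=
    fun y => (g y, π y) with hh
  have hsh : HasStrictFDerivAt h
      (e : EuclideanSpace ℝ (Fin n) →L[ℝ] EuclideanSpace ℝ (Fin (n-m)) × Kr) q := by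
    rw [heT, hT]
    have h1 : HasStrictFDerivAt g A q := by
      have := (hg.contDiffAt (x := q)).hasStrictFDerivAt
        (by simp)
      rwa [hfderivg] at this
    exact h1.prodMk (π.hasStrictFDerivAt)
  set ginv := hsh.localInverse h e q with hginv
  have hgq0 : g q = 0 := hgM q hq
  have hhq : h q = (0, π q) := by rw [hh]; simp [hgq0]
  obtain ⟨L, u, hu, hLip⟩ := hsh.to_localInverse.exists_lipschitzOnWith
  -- continuity data
  have hcπ : Continuous (fun y : EuclideanSpace ℝ (Fin n) => ((0 : EuclideanSpace ℝ (Fin (n-m))), π y)) :=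
    continuous_const.prodMk π.continuous
  have hcq : (fun y : EuclideanSpace ℝ (Fin n) => ((0 : EuclideanSpace ℝ (Fin (n-m))), π y)) q = h q := by
    rw [hhq]
  have htc : Filter.Tendsto (fun y : EuclideanSpace ℝ (Fin n) => ((0 : EuclideanSpace ℝ (Fin (n-m))), π y))
      (nhds q) (nhds (h q)) := by
    rw [← hcq]
    exact hcπ.continuousAt
  have hginvq : ginv (h q) = q := hsh.localInverse_apply_image
  have htinv : Filter.Tendsto ginv (nhds (h q)) (nhds q) := by
    have h' := hsh.localInverse_continuousAt.tendsto
    rwa [show HasStrictFDerivAt.localInverse h e q hsh (h q) = q from hginvq] at h'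
  have htw : Filter.Tendsto (fun y => ginv ((0 : EuclideanSpace ℝ (Fin (n-m))), π y)) (nhds q) (nhds q) :=
    htinv.comp htc
  have hhcont : Filter.Tendsto h (nhds q) (nhds (h q)) := by
    have : Continuous h := (hg.continuous).prodMk π.continuous
    exact this.continuousAt
  -- the five eventual properties
  have E1 : ∀ᶠ y in nhds q, ginv (h y) = y := hsh.eventually_left_inverse
  have E2 : ∀ᶠ y in nhds q, h y ∈ u := hhcont.eventually_mem hu
  have E3 : ∀ᶠ y in nhds q, ((0 : EuclideanSpace ℝ (Fin (n-m))), π y) ∈ u := htc.eventually_mem hu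
  have E4 : ∀ᶠ y in nhds q, h (ginv ((0 : EuclideanSpace ℝ (Fin (n-m))), π y))
      = ((0 : EuclideanSpace ℝ (Fin (n-m))), π y) := htc.eventually hsh.eventually_right_inverse
  have E5 : ∀ᶠ y in nhds q, ginv ((0 : EuclideanSpace ℝ (Fin (n-m))), π y) ∈ Metric.ball q (r0/3) :=
    htw.eventually_mem (Metric.ball_mem_nhds q (by positivity))
  obtain ⟨ρ, hρ, hρall⟩ := Metric.eventually_nhds_iff_ball.mp ((((E1.and E2).and E3).and E4).and E5)
  refine ⟨g, (L : ℝ) + 1, ρ, by positivity, hρ, hg, hgM, ?_⟩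
  intro y hyq
  obtain ⟨⟨⟨⟨h1, h2⟩, h3⟩, h4⟩, h5⟩ := hρall y (Metric.mem_ball.mpr hyq)
  set y' := ginv ((0 : EuclideanSpace ℝ (Fin (n-m))), π y) with hy'
  have hgy' : g y' = 0 := congrArg Prod.fst h4
  have hfy' : f y' = 0 := by rw [← hgf y' h5]; exact hgy'
  have hy'U : y' ∈ U := hball (Metric.ball_subset_ball (by linarith) h5)
  have hy'M : y' ∈ M := by
    have : y' ∈ M ∩ U := by rw [hMU]; exact ⟨hy'U, hfy'⟩
    exact this.1
  have hdist : dist y y' ≤ (L : ℝ) * ‖g y‖ := by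
    have hl := hLip.dist_le_mul (h y) h2 ((0 : EuclideanSpace ℝ (Fin (n-m))), π y) h3
    have hd : dist (h y) ((0 : EuclideanSpace ℝ (Fin (n-m))), π y) = ‖g y‖ := by
      rw [hh, Prod.dist_eq]
      simp [dist_eq_norm]
    rw [hd] at hl
    calc dist y y' = dist (ginv (h y)) (ginv ((0 : EuclideanSpace ℝ (Fin (n-m))), π y)) := by
          rw [h1]
      _ ≤ (L : ℝ) * ‖g y‖ := hl
  calc Metric.infDist y M ≤ dist y y' := Metric.infDist_le_dist_of_mem hy'M
    _ ≤ (L : ℝ) * ‖g y‖ := hdist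
    _ ≤ ((L : ℝ) + 1) * ‖g y‖ := by
        apply mul_le_mul_of_nonneg_right _ (norm_nonneg _)
        linarith

/-- If `M ⊆ ℝⁿ` is an `m`-dimensional `C^∞` submanifold, `I` an open interval containing
`0`, and `φ : ℝⁿ × I → ℝⁿ` a `C^∞` map such that for every `x ∈ M` the curve
`t ↦ φ(x,t)` has contact of order `k` with `M` at `t = 0`, then
`d(φ(x,t), M)/|t|^k → 0` as `t → 0`, uniformly on compact subsets of `M`. -/
theorem contact_implies_uniform_distance_decay {n m k : ℕ} (hmn : m ≤ n)
    (M : Set (EuclideanSpace ℝ (Fin n))) (hM : IsSmoothSubmanifold m M)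
    (a b : ℝ) (ha : a < 0) (hb : 0 < b)
    (φ : EuclideanSpace ℝ (Fin n) × ℝ → EuclideanSpace ℝ (Fin n))
    (hφ : ContDiffOn ℝ (⊤ : ℕ∞) φ (Set.univ ×ˢ Set.Ioo a b))
    (hcontact : ∀ x ∈ M, HasContactOrderAt k (fun t => φ (x, t)) M) :
    ∀ K ⊆ M, IsCompact K → ∀ ε > 0, ∃ δ > 0, ∀ x ∈ K, ∀ t ∈ Set.Ioo a b,
      0 < |t| → |t| < δ → Metric.infDist (φ (x, t)) M ≤ ε * |t| ^ k := by
  intro K hKM hK ε hε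
  have hφ' : ContDiffOn ℝ ((⊤ : ℕ∞) : WithTop ℕ∞) φ (Set.univ ×ˢ Set.Ioo a b) :=
    hφ.of_le (by simp)
  have hW : IsOpen ((Set.univ : Set (EuclideanSpace ℝ (Fin n))) ×ˢ Set.Ioo a b) :=
    isOpen_univ.prod isOpen_Ioo
  have key : ∀ p ∈ K, ∃ r > 0, ∃ d > 0, ∀ x ∈ M, dist x p ≤ r → ∀ t : ℝ, |t| ≤ d →
      Metric.infDist (φ (x, t)) M ≤ ε * |t| ^ k := by
    intro p hpK
    have hpM : p ∈ M := hKM hpK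
    obtain ⟨δ₀, hδ₀s, hδ₀M, hδ₀j⟩ := hcontact p hpM
    have hqM : φ (p, 0) ∈ M := by
      have h0 := hδ₀j 0 (Nat.zero_le k)
      simp only [iteratedDeriv_zero] at h0
      rw [h0]
      exact hδ₀M 0
    obtain ⟨g, C, ρ, hC, hρ, hg, hgM0, hbound⟩ := local_dist_bound M hM (φ (p, 0)) hqM
    set H : EuclideanSpace ℝ (Fin n) × ℝ → EuclideanSpace ℝ (Fin (n - m)) :=
      fun z => g (φ z) with hHdef
    have hH : ContDiffOn ℝ ((⊤ : ℕ∞) : WithTop ℕ∞) H (Set.univ ×ˢ Set.Ioo a b) :=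
      hg.comp_contDiffOn hφ'
    have hS : ∀ x ∈ M, ∀ j ≤ k, iteratedDeriv j (fun t => H (x, t)) 0 = 0 := by
      intro x hxM j hj
      obtain ⟨δx, hδxs, hδxM, hδxj⟩ := hcontact x hxM
      have hγ : ContDiffOn ℝ ((⊤ : ℕ∞) : WithTop ℕ∞) (fun t : ℝ => φ (x, t))
          (Set.Ioo a b) := by
        have hcur : ContDiff ℝ ((⊤ : ℕ∞) : WithTop ℕ∞)
            (fun t : ℝ => ((x, t) : EuclideanSpace ℝ (Fin n) × ℝ)) :=
          contDiff_const.prodMk contDiff_id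
        exact hφ'.comp hcur.contDiffOn (fun t ht => ⟨Set.mem_univ _, ht⟩)
      have hδx' : ContDiffOn ℝ ((⊤ : ℕ∞) : WithTop ℕ∞) δx (Set.Ioo a b) :=
        (hδxs.of_le (by simp)).contDiffOn
      have hjc := jets_comp k g hg (Set.Ioo a b) isOpen_Ioo ⟨ha, hb⟩
        (fun t => φ (x, t)) δx hγ hδx' hδxj j hj
      have hz : iteratedDeriv j (fun t => g (δx t)) 0 = 0 := by
        have hzero : (fun t => g (δx t)) = fun _ : ℝ => (0 : EuclideanSpace ℝ (Fin (n - m))) :=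
          funext fun t => hgM0 _ (hδxM t)
        rw [hzero]
        exact iteratedDeriv_zero_fun j 0
      exact hjc.trans hz
    obtain ⟨r, hr, d, hd, hb2⟩ := uniform_vanish ha hb k H hH M hS p (ε / C)
      (div_pos hε hC)
    have hcont : ContinuousAt φ (p, 0) :=
      hφ'.continuousOn.continuousAt (hW.mem_nhds ⟨Set.mem_univ _, ha, hb⟩)
    obtain ⟨η, hη, hηball⟩ := Metric.continuousAt_iff.mp hcont ρ hρ
    refine ⟨min r (η/2), lt_min hr (by positivity), min d (η/2),
      lt_min hd (by positivity), ?_⟩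
    intro x hxM hxp t ht
    have h1r : dist x p ≤ r := le_trans hxp (min_le_left _ _)
    have h1d : |t| ≤ d := le_trans ht (min_le_left _ _)
    have h2 : dist ((x, t) : EuclideanSpace ℝ (Fin n) × ℝ) (p, 0) < η := by
      rw [Prod.dist_eq]
      have hd0 : dist t (0:ℝ) = |t| := by rw [Real.dist_eq, sub_zero]
      rw [hd0]
      have : max (dist x p) |t| ≤ η/2 :=
        max_le (le_trans hxp (min_le_right _ _)) (le_trans ht (min_le_right _ _))
      exact lt_of_le_of_lt this (by linarith)
    have h3 : dist (φ (x, t)) (φ (p, 0)) < ρ := hηball h2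
    have h4 : Metric.infDist (φ (x, t)) M ≤ C * ‖g (φ (x, t))‖ := hbound _ h3
    have h5 : ‖H (x, t)‖ ≤ (ε / C) * |t| ^ k := hb2 x hxM h1r t h1d
    calc Metric.infDist (φ (x, t)) M ≤ C * ‖g (φ (x, t))‖ := h4
      _ ≤ C * ((ε / C) * |t| ^ k) := by
          apply mul_le_mul_of_nonneg_left h5 hC.le
      _ = ε * |t| ^ k := by field_simp
  choose! r hr d hd hbd using key
  obtain ⟨T, hTK, hcover⟩ := hK.elim_nhds_subcover (fun p => Metric.ball p (r p))
    (fun p hp => Metric.ball_mem_nhds p (hr p hp))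
  rcases T.eq_empty_or_nonempty with hTe | hTne
  · refine ⟨1, one_pos, ?_⟩
    intro x hx
    exfalso
    have h' := hcover hx
    rw [hTe] at h'
    simp at h'
  · refine ⟨T.inf' hTne d, ?_, ?_⟩
    · exact (Finset.lt_inf'_iff hTne).mpr (fun p hp => hd p (hTK p hp))
    · intro x hx t htI htpos htδ
      have := hcover hx
      rw [Set.mem_iUnion₂] at this
      obtain ⟨p, hpT, hxball⟩ := this
      have hδd : T.inf' hTne d ≤ d p := Finset.inf'_le _ hpT
      exact hbd p (hTK p hpT) x (hKM hx) (le_of_lt (Metric.mem_ball.mp hxball)) t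
        (le_of_lt (lt_of_lt_of_le htδ hδd))
end

section
/- Let U ⊆ ℝ^m be open, let d ≥ 0, and let a₀, a₁, …, a_d : U → ℝ be continuous functions, each Lebesgue-integrable on U. Define A(x,t) = a₀(x) + a₁(x)·t + ⋯ + a_d(x)·t^d. If lim_{t→0⁺} t^{−(d+1)} ∫_{−t}^{t} ∫_U |A(x,s)| dx ds = 0, then a_i(x) = 0 for every x ∈ U and every i ∈ {0, 1, …, d}. -/
/-!
For a fixed set `B ⊆ U`, the moments `b i = ∫_B a i` are the coefficients of the polynomial
`q(s) = ∫_B A(x, s) dx`, and `|q(s)| ≤ F(s) := ∫_U |A(x, s)| dx`. If `q ≠ 0`, its lowest-order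
term `s ^ j` with `j ≤ d` dominates near `0`, so `∫_{-t}^t F ≥ c t ^ (j + 1) ≥ c t ^ (d + 1)`
for small `t`, contradicting the hypothesis. Hence every moment vanishes, and a continuous
integrable function all of whose integrals over subsets of the open set `U` vanish is zero on `U`.
-/

open MeasureTheory Set Filter Topology Polynomial

namespace Polynomial

theorem exists_pos_mul_abs_pow_natTrailingDegree_le_abs_eval {p : ℝ[X]} (hp : p ≠ 0) :
    ∃ c > 0, ∀ᶠ s in 𝓝 0, c * |s| ^ p.natTrailingDegree ≤ |p.eval s| := by
  set j := p.natTrailingDegree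
  obtain ⟨r, hpr⟩ : X ^ j ∣ p := X_pow_dvd_iff.2 fun _ => coeff_eq_zero_of_lt_natTrailingDegree
  have hr0 : 0 < |r.eval 0| := by
    have hcoeff : p.coeff j = r.coeff 0 := by rw [hpr, ← coeff_X_pow_mul r j 0, zero_add]
    rw [abs_pos, ← coeff_zero_eq_eval_zero, ← hcoeff]
    exact trailingCoeff_nonzero_iff_nonzero.2 hp
  have hr : ∀ᶠ s in 𝓝 0, |r.eval 0| / 2 < |r.eval s| :=
    (r.continuous.abs.tendsto 0).eventually (lt_mem_nhds (half_lt_self hr0))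
  refine ⟨|r.eval 0| / 2, half_pos hr0, hr.mono fun s hs => ?_⟩
  rw [hpr, eval_mul, eval_pow, eval_X, abs_mul, abs_pow, mul_comm]
  exact mul_le_mul_of_nonneg_left hs.le (by positivity)

theorem eq_zero_of_abs_eval_le_of_tendsto {p : ℝ[X]} {d : ℕ} (hpd : p.natDegree ≤ d)
    {F : ℝ → ℝ} (hF : Continuous F) (hpF : ∀ s, |p.eval s| ≤ F s)
    (hlim : Tendsto (fun t => (∫ s in (-t)..t, F s) / t ^ (d + 1)) (𝓝[>] 0) (𝓝 0)) :
    p = 0 := by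
  by_contra hp
  set j := p.natTrailingDegree
  obtain ⟨c, hc, hcp⟩ := exists_pos_mul_abs_pow_natTrailingDegree_le_abs_eval hp
  obtain ⟨δ, hδ, hδp⟩ := Metric.eventually_nhds_iff.1 hcp
  have hjd : j + 1 ≤ d + 1 := by have := natTrailingDegree_le_natDegree p; omega
  have hbound : ∀ t ∈ Ioo 0 (min δ 1), c / (j + 1) ≤ (∫ s in (-t)..t, F s) / t ^ (d + 1) := by
    rintro t ⟨ht0, htδ⟩
    have hFt : ∀ s ∈ Icc 0 t, c * s ^ j ≤ F s := fun s hs => by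
      have hsδ : dist s 0 < δ := by
        rw [Real.dist_0_eq_abs, abs_of_nonneg hs.1]
        exact hs.2.trans_lt (htδ.trans_le (min_le_left _ _))
      simpa only [abs_of_nonneg hs.1] using (hδp hsδ).trans (hpF s)
    rw [le_div_iff₀ (by positivity)]
    calc c / (j + 1) * t ^ (d + 1)
        ≤ c / (j + 1) * t ^ (j + 1) := mul_le_mul_of_nonneg_left
          (pow_le_pow_of_le_one ht0.le (htδ.le.trans (min_le_right _ _)) hjd) (by positivity)
      _ = ∫ s in 0..t, c * s ^ j := by
          rw [intervalIntegral.integral_const_mul, integral_pow]; ring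
      _ ≤ ∫ s in 0..t, F s := intervalIntegral.integral_mono_on ht0.le
          ((continuous_const.mul (continuous_pow j)).intervalIntegrable _ _)
          (hF.intervalIntegrable _ _) hFt
      _ ≤ ∫ s in (-t)..t, F s :=
          intervalIntegral.integral_mono_interval (by linarith) ht0.le le_rfl
            (ae_of_all _ fun s => (abs_nonneg _).trans (hpF s)) (hF.intervalIntegrable _ _)
  have hpos : 0 < c / (j + 1) := by positivity
  exact hpos.not_ge <| ge_of_tendsto hlim <|
    eventually_of_mem (Ioo_mem_nhdsGT (lt_min hδ one_pos)) hbound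

end Polynomial

theorem eq_zero_of_abs_sum_mul_pow_le_of_tendsto {d : ℕ} {b : Fin (d + 1) → ℝ} {F : ℝ → ℝ}
    (hF : Continuous F) (hbF : ∀ s, |∑ i, b i * s ^ (i : ℕ)| ≤ F s)
    (hlim : Tendsto (fun t => (∫ s in (-t)..t, F s) / t ^ (d + 1)) (𝓝[>] 0) (𝓝 0)) :
    b = 0 := by
  set p : ℝ[X] := ∑ i : Fin (d + 1), monomial (i : ℕ) (b i)
  have hpd : p.natDegree ≤ d := natDegree_sum_le_of_forall_le _ _ fun i _ =>
    (natDegree_monomial_le _).trans (Nat.lt_succ_iff.1 i.isLt)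
  have hp : p = 0 := eq_zero_of_abs_eval_le_of_tendsto hpd hF
    (by simpa only [p, eval_finsetSum, eval_monomial] using hbF) hlim
  funext i
  simpa [p, coeff_monomial, Fin.val_inj] using congrArg (coeff · i) hp

theorem abs_sum_setIntegral_mul_le_integral_abs_sum {α ι : Type*} [Fintype ι] [MeasurableSpace α]
    {μ : Measure α} {U B : Set α} (hBU : B ⊆ U) {a : ι → α → ℝ}
    (ha : ∀ i, IntegrableOn (a i) U μ) (c : ι → ℝ) :
    |∑ i, (∫ x in B, a i x ∂μ) * c i| ≤ ∫ x in U, |∑ i, a i x * c i| ∂μ := by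
  have hB : ∀ i, IntegrableOn (a i) B μ := fun i => (ha i).mono_set hBU
  have hU : IntegrableOn (fun x => ∑ i, a i x * c i) U μ :=
    integrable_finsetSum _ fun i _ => (ha i).mul_const _
  calc |∑ i, (∫ x in B, a i x ∂μ) * c i| = |∫ x in B, ∑ i, a i x * c i ∂μ| := by
        rw [integral_finsetSum _ fun i _ => (hB i).mul_const _]
        simp only [integral_mul_const]
    _ ≤ ∫ x in B, |∑ i, a i x * c i| ∂μ := abs_integral_le_integral_abs
    _ ≤ ∫ x in U, |∑ i, a i x * c i| ∂μ :=
        setIntegral_mono_set hU.abs (ae_of_all _ fun _ => abs_nonneg _) hBU.eventuallyLE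

theorem continuous_integral_abs_sum_mul_pow {α : Type*} [MeasurableSpace α] {μ : Measure α}
    {n : ℕ} {a : Fin n → α → ℝ} (ha : ∀ i, Integrable (a i) μ) :
    Continuous fun s : ℝ => ∫ x, |∑ i, a i x * s ^ (i : ℕ)| ∂μ := by
  refine continuous_iff_continuousAt.2 fun s₀ => continuousAt_of_dominated
    (bound := fun x => ∑ i, |a i x| * (|s₀| + 1) ^ (i : ℕ)) ?_ ?_ ?_ ?_
  · exact Eventually.of_forall fun s =>
      (integrable_finsetSum _ fun i _ => (ha i).mul_const _).abs.aestronglyMeasurable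
  · filter_upwards [Metric.ball_mem_nhds s₀ one_pos] with s hs
    have hs' : |s| ≤ |s₀| + 1 := by
      have := abs_sub_abs_le_abs_sub s s₀
      rw [Metric.mem_ball, Real.dist_eq] at hs
      linarith
    refine ae_of_all _ fun x => ?_
    rw [Real.norm_eq_abs, abs_abs]
    refine (Finset.abs_sum_le_sum_abs _ _).trans (Finset.sum_le_sum fun i _ => ?_)
    rw [abs_mul, abs_pow]
    gcongr
  · exact integrable_finsetSum _ fun i _ => (ha i).abs.mul_const _
  · exact ae_of_all _ fun x => by fun_prop

theorem eqOn_zero_of_forall_setIntegral_eq_zero {X E : Type*} [TopologicalSpace X]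
    [MeasurableSpace X] [OpensMeasurableSpace X] {μ : Measure X} [μ.IsOpenPosMeasure]
    [NormedAddCommGroup E] [NormedSpace ℝ E] [CompleteSpace E] {U : Set X} (hU : IsOpen U)
    {f : X → E} (hf : ContinuousOn f U) (hfi : IntegrableOn f U μ)
    (h : ∀ B ⊆ U, MeasurableSet B → ∫ x in B, f x ∂μ = 0) : EqOn f 0 U := by
  refine μ.eqOn_open_of_ae_eq ?_ hU hf continuousOn_const
  refine hfi.ae_eq_zero_of_forall_setIntegral_eq_zero fun B hB _ => ?_
  rw [Measure.restrict_restrict hB]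
  exact h _ inter_subset_right (hB.inter hU.measurableSet)

/-- Let `U ⊆ ℝ^m` be open and `a₀, …, a_d : U → ℝ` continuous and integrable on `U`,
and set `A(x,t) = a₀(x) + a₁(x)·t + ⋯ + a_d(x)·t^d`. If
`t^{−(d+1)} ∫_{−t}^{t} ∫_U |A(x,s)| dx ds → 0` as `t → 0⁺`, then all the coefficient
functions `a_i` vanish identically on `U`. -/
theorem poly_coefficients_vanish_of_slow_integral {m : ℕ}
    (U : Set (EuclideanSpace ℝ (Fin m))) (hU : IsOpen U)
    (d : ℕ) (a : Fin (d + 1) → EuclideanSpace ℝ (Fin m) → ℝ)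
    (hcont : ∀ i, ContinuousOn (a i) U)
    (hint : ∀ i, MeasureTheory.IntegrableOn (a i) U)
    (A : EuclideanSpace ℝ (Fin m) → ℝ → ℝ)
    (hA : ∀ x t, A x t = ∑ i : Fin (d + 1), a i x * t ^ (i : ℕ))
    (hlim : Filter.Tendsto
      (fun t : ℝ => (∫ s in (-t)..t, ∫ x in U, |A x s|) / t ^ (d + 1))
      (nhdsWithin 0 (Set.Ioi 0)) (nhds 0)) :
    ∀ x ∈ U, ∀ i, a i x = 0 := by
  have hF : Continuous fun s => ∫ x in U, |A x s| := by
    simpa only [hA] using continuous_integral_abs_sum_mul_pow hint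
  have hmoments : ∀ B ⊆ U, (fun i => ∫ x in B, a i x) = 0 := fun B hBU =>
    eq_zero_of_abs_sum_mul_pow_le_of_tendsto hF (fun s => by
      simpa only [hA] using abs_sum_setIntegral_mul_le_integral_abs_sum hBU hint _) hlim
  intro x hx i
  exact eqOn_zero_of_forall_setIntegral_eq_zero hU (hcont i) (hint i)
    (fun B hBU _ => congrFun (hmoments B hBU) i) hx
end

section
/- Let M ⊆ ℝⁿ be a proper (i.e., closed in ℝⁿ) m-dimensional real-analytic submanifold, and let γ : ℝ → ℝⁿ be a real-analytic curve. If there exists ε > 0 such that γ(t) ∈ M for all t ∈ (−ε, ε), then γ(t) ∈ M for all t ∈ ℝ. -/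
/-!
Let `S = γ⁻¹' M`. Its interior is open and nonempty, and it is also closed: a limit point `t` of
the interior lies in `S` because `M` is closed, so near `γ t` the set `M` is the zero set of an
analytic `f`. On a ball around `t` mapped into the domain of `f`, the analytic function `f ∘ γ`
vanishes on an open piece of the interior, hence on the whole ball by the identity theorem, so the
ball lies in `S`. By connectedness of `ℝ`, the interior of `S` is everything.
-/

/-- `M ⊆ ℝⁿ` is an `m`-dimensional real-analytic submanifold: around every point of `M`
there is an open set `U` and a real-analytic map `f : U → ℝ^(n-m)` with surjective
derivative at every point of `U` such that `M ∩ U = {x ∈ U | f x = 0}`. -/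
def IsAnalyticSubmanifold {n : ℕ} (m : ℕ) (M : Set (EuclideanSpace ℝ (Fin n))) : Prop :=
  ∀ p ∈ M, ∃ U : Set (EuclideanSpace ℝ (Fin n)), IsOpen U ∧ p ∈ U ∧
    ∃ f : EuclideanSpace ℝ (Fin n) → EuclideanSpace ℝ (Fin (n - m)),
      AnalyticOnNhd ℝ f U ∧ (∀ x ∈ U, Function.Surjective (fderiv ℝ f x)) ∧
      M ∩ U = {x ∈ U | f x = 0}

open Set Topology

section

variable {E F G : Type*} [NormedAddCommGroup E] [NormedSpace ℝ E]
  [NormedAddCommGroup F] [NormedSpace ℝ F] [NormedAddCommGroup G] [NormedSpace ℝ G]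
  {γ : E → F} {M : Set F}

variable (G) in
def IsLocallyAnalyticZeroSet (M : Set F) : Prop :=
  ∀ p ∈ M, ∃ U : Set F, IsOpen U ∧ p ∈ U ∧
    ∃ f : F → G, AnalyticOnNhd ℝ f U ∧ M ∩ U = {x ∈ U | f x = 0}

theorem AnalyticOnNhd.mem_interior_preimage_of_mem_closure (hγ : AnalyticOnNhd ℝ γ univ)
    {U : Set F} {f : F → G} (hU : IsOpen U) (hf : AnalyticOnNhd ℝ f U)
    (hMU : M ∩ U = {x ∈ U | f x = 0}) {t : E} (htU : γ t ∈ U)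
    (ht : t ∈ closure (interior (γ ⁻¹' M))) : t ∈ interior (γ ⁻¹' M) := by
  have hγc : Continuous γ := continuousOn_univ.mp hγ.continuousOn
  obtain ⟨r, hr, hball⟩ : ∃ r > 0, Metric.ball t r ⊆ γ ⁻¹' U :=
    Metric.isOpen_iff.mp (hU.preimage hγc) t htU
  obtain ⟨w, hwball, hwS⟩ : (Metric.ball t r ∩ interior (γ ⁻¹' M)).Nonempty :=
    mem_closure_iff_nhds.mp ht _ (Metric.ball_mem_nhds t hr)
  have hfγ : AnalyticOnNhd ℝ (f ∘ γ) (Metric.ball t r) := fun s hs =>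
    (hf (γ s) (hball hs)).comp (hγ s (mem_univ s))
  have hzero_near_w : f ∘ γ =ᶠ[𝓝 w] 0 := by
    filter_upwards [(Metric.isOpen_ball.inter isOpen_interior).mem_nhds ⟨hwball, hwS⟩]
      with s ⟨hsball, hsS⟩
    have hs : γ s ∈ M ∩ U := ⟨interior_subset (s := γ ⁻¹' M) hsS, hball hsball⟩
    rw [hMU] at hs
    exact hs.2
  have hzero : EqOn (f ∘ γ) 0 (Metric.ball t r) :=
    hfγ.eqOn_zero_of_preconnected_of_eventuallyEq_zero
      (convex_ball t r).isPreconnected hwball hzero_near_w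
  have hball_sub : Metric.ball t r ⊆ γ ⁻¹' M := fun s hs => by
    have hs' : γ s ∈ M ∩ U := by
      rw [hMU]
      exact ⟨hball hs, hzero hs⟩
    exact hs'.1
  exact interior_maximal hball_sub Metric.isOpen_ball (Metric.mem_ball_self hr)

theorem AnalyticOnNhd.isClosed_interior_preimage (hγ : AnalyticOnNhd ℝ γ univ)
    (hMclosed : IsClosed M) (hM : IsLocallyAnalyticZeroSet G M) :
    IsClosed (interior (γ ⁻¹' M)) := by
  refine closure_subset_iff_isClosed.mp fun t ht => ?_
  have hSclosed : IsClosed (γ ⁻¹' M) :=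
    hMclosed.preimage (continuousOn_univ.mp hγ.continuousOn)
  have htS : γ t ∈ M := hSclosed.closure_subset (closure_mono interior_subset ht)
  obtain ⟨U, hU, htU, f, hf, hMU⟩ := hM (γ t) htS
  exact hγ.mem_interior_preimage_of_mem_closure hU hf hMU htU ht

theorem AnalyticOnNhd.mem_of_nonempty_interior_preimage [PreconnectedSpace E]
    (hγ : AnalyticOnNhd ℝ γ univ) (hMclosed : IsClosed M)
    (hM : IsLocallyAnalyticZeroSet G M)
    (hne : (interior (γ ⁻¹' M)).Nonempty) (t : E) : γ t ∈ M := by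
  have hclopen : IsClopen (interior (γ ⁻¹' M)) :=
    ⟨hγ.isClosed_interior_preimage hMclosed hM, isOpen_interior⟩
  exact interior_subset (s := γ ⁻¹' M) (hclopen.eq_univ hne ▸ mem_univ t)

end

theorem IsAnalyticSubmanifold.isLocallyAnalyticZeroSet {n m : ℕ}
    {M : Set (EuclideanSpace ℝ (Fin n))} (hM : IsAnalyticSubmanifold m M) :
    IsLocallyAnalyticZeroSet (EuclideanSpace ℝ (Fin (n - m))) M := fun p hp => by
  obtain ⟨U, hU, hpU, f, hf, -, hMU⟩ := hM p hp
  exact ⟨U, hU, hpU, f, hf, hMU⟩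

theorem analytic_curve_propagation_general {n m : ℕ}
    (M : Set (EuclideanSpace ℝ (Fin n))) (hMclosed : IsClosed M)
    (hM : IsAnalyticSubmanifold m M)
    (γ : ℝ → EuclideanSpace ℝ (Fin n)) (hγ : AnalyticOnNhd ℝ γ Set.univ)
    (ε : ℝ) (hε : 0 < ε) (h : ∀ t ∈ Set.Ioo (-ε) ε, γ t ∈ M) :
    ∀ t : ℝ, γ t ∈ M := by
  have hne : (interior (γ ⁻¹' M)).Nonempty :=
    ⟨0, interior_maximal h isOpen_Ioo ⟨neg_lt_zero.mpr hε, hε⟩⟩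
  exact hγ.mem_of_nonempty_interior_preimage hMclosed hM.isLocallyAnalyticZeroSet hne

/-- If `M ⊆ ℝⁿ` is a proper (closed) `m`-dimensional real-analytic submanifold and
`γ : ℝ → ℝⁿ` is a real-analytic curve lying in `M` on some interval `(−ε, ε)`, then
`γ` lies in `M` for all time. -/
theorem analytic_curve_propagation {n m : ℕ} (hmn : m ≤ n)
    (M : Set (EuclideanSpace ℝ (Fin n))) (hMclosed : IsClosed M)
    (hM : IsAnalyticSubmanifold m M)
    (γ : ℝ → EuclideanSpace ℝ (Fin n)) (hγ : AnalyticOnNhd ℝ γ Set.univ)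
    (ε : ℝ) (hε : 0 < ε) (h : ∀ t ∈ Set.Ioo (-ε) ε, γ t ∈ M) :
    ∀ t : ℝ, γ t ∈ M :=
  analytic_curve_propagation_general M hMclosed hM γ hγ ε hε h
end
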